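/- arXiv:2411.18059 — 4 statements merged into one kernel-verified Lean document; each statement's English description precedes it below -/
import Mathlib

section
/- Let A ∈ (0,1), M ∈ (-1,0), Q > 0 with AMQ + C < 0 and C > 0, and let v_p > 0 satisfy -AM < v_p. Define I(v₀) = ((AMQ+C)/(AQS))·ln((C-Qv_p)/(C-Qv₀)) + (M/S)·ln(v₀/v_p) for v₀ ∈ (C/Q, -AM), with S > 0. Then I is continuous and strictly increasing on (C/Q, -AM), I(v₀) → -∞ as v₀ → (C/Q)⁺, and I(-AM) > 0; consequently there exists a unique v₀ ∈ (C/Q, -AM) with I(v₀) = 0. -/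
/-!
On `v > C/Q` the derivative `I'(v) = C(v + AM)/(A S v (C - Q v))` has a negative denominator, so `I`
increases up to `-AM` and decreases after it. As `I(v_p) = 0` with `v_p > -AM`, this forces
`I(-AM) > 0`. Near `C/Q` the term `log((C - Q v_p)/(C - Q v))` tends to `+∞` and its coefficient
`(AMQ + C)/(AQS)` is negative, so `I → -∞`; the intermediate value theorem and strict monotonicity
give the unique zero.
-/

open Real Filter Set Topology

theorem StrictMonoOn.existsUnique_eq_of_tendsto_atBot {X α : Type*}
    [ConditionallyCompleteLinearOrder X] [DenselyOrdered X] [TopologicalSpace X] [OrderTopology X]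
    [LinearOrder α] [TopologicalSpace α] [OrderClosedTopology α]
    {f : X → α} {a b : X} (hab : a < b) (hmono : StrictMonoOn f (Ioc a b))
    (hf : ContinuousOn f (Ioc a b)) (hbot : Tendsto f (𝓝[>] a) atBot) {y : α} (hy : y < f b) :
    ∃! x, x ∈ Ioo a b ∧ f x = y := by
  have : (𝓝[Ioc a b] a).NeBot := left_nhdsWithin_Ioc_neBot hab
  obtain ⟨x, hx, rfl⟩ := isPreconnected_Ioc.intermediate_value_Iic (l := 𝓝[Ioc a b] a)
    (right_mem_Ioc.2 hab) inf_le_right hf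
    (hbot.mono_left (nhdsWithin_mono _ Ioc_subset_Ioi_self)) hy.le
  have hxb : x ≠ b := by rintro rfl; exact hy.false
  refine ⟨x, ⟨⟨hx.1, hx.2.lt_of_ne hxb⟩, rfl⟩, fun x' hx' => ?_⟩
  exact hmono.injOn (Ioo_subset_Ioc_self hx'.1) hx hx'.2

theorem sub_mul_neg_of_div_lt {C Q v : ℝ} (hQ : 0 < Q) (hv : C/Q < v) : C - Q*v < 0 := by
  rw [div_lt_iff₀ hQ] at hv
  linarith

noncomputable def entryExit (A M C Q S v_p v₀ : ℝ) : ℝ :=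
  ((A*M*Q + C)/(A*Q*S)) * Real.log ((C - Q*v_p)/(C - Q*v₀)) + (M/S) * Real.log (v₀/v_p)

section

variable {A M C Q S v_p v : ℝ}

@[simp]
theorem entryExit_self : entryExit A M C Q S v_p v_p = 0 := by
  simp [entryExit]

theorem hasDerivAt_entryExit (hA : A ≠ 0) (hQ : Q ≠ 0) (hS : S ≠ 0) (hvp : v_p ≠ 0)
    (hCvp : C - Q*v_p ≠ 0) (hv : v ≠ 0) (hCv : C - Q*v ≠ 0) :
    HasDerivAt (entryExit A M C Q S v_p) (C*(v + A*M)/(A*S*v*(C - Q*v))) v := by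
  have hden : HasDerivAt (fun v => C - Q*v) (-Q) v := by
    simpa using ((hasDerivAt_id v).const_mul Q).const_sub C
  have h₁ := ((hasDerivAt_const v (C - Q*v_p)).div hden hCv).log (div_ne_zero hCvp hCv)
  have h₂ := ((hasDerivAt_id v).div_const v_p).log (div_ne_zero hv hvp)
  refine ((h₁.const_mul ((A*M*Q + C)/(A*Q*S))).add (h₂.const_mul (M/S))).congr_deriv ?_
  simp only [Pi.div_apply, id]
  field_simp
  ring

theorem hasDerivAt_entryExit_of_div_lt (hA : A ≠ 0) (hC : 0 < C) (hQ : 0 < Q) (hS : S ≠ 0)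
    (hvp : C/Q < v_p) (hv : C/Q < v) :
    HasDerivAt (entryExit A M C Q S v_p) (C*(v + A*M)/(A*S*v*(C - Q*v))) v :=
  hasDerivAt_entryExit hA hQ.ne' hS ((div_pos hC hQ).trans hvp).ne'
    (sub_mul_neg_of_div_lt hQ hvp).ne ((div_pos hC hQ).trans hv).ne'
    (sub_mul_neg_of_div_lt hQ hv).ne

theorem continuousOn_entryExit (hA : A ≠ 0) (hC : 0 < C) (hQ : 0 < Q) (hS : S ≠ 0)
    (hvp : C/Q < v_p) : ContinuousOn (entryExit A M C Q S v_p) (Ioi (C/Q)) := fun _ hv =>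
  (hasDerivAt_entryExit_of_div_lt hA hC hQ hS hvp hv).continuousAt.continuousWithinAt

theorem strictMonoOn_entryExit (hA : 0 < A) (hC : 0 < C) (hQ : 0 < Q) (hS : 0 < S)
    (hvp : C/Q < v_p) : StrictMonoOn (entryExit A M C Q S v_p) (Ioc (C/Q) (-(A*M))) := by
  refine strictMonoOn_of_deriv_pos (convex_Ioc _ _)
    ((continuousOn_entryExit hA.ne' hC hQ hS.ne' hvp).mono Ioc_subset_Ioi_self) fun v hv => ?_
  rw [interior_Ioc] at hv
  have hv0 : 0 < v := (div_pos hC hQ).trans hv.1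
  rw [(hasDerivAt_entryExit_of_div_lt hA.ne' hC hQ hS.ne' hvp hv.1).deriv]
  refine div_pos_of_neg_of_neg (mul_neg_of_pos_of_neg hC (by linarith [hv.2])) ?_
  exact mul_neg_of_pos_of_neg (by positivity) (sub_mul_neg_of_div_lt hQ hv.1)

theorem strictAntiOn_entryExit (hA : 0 < A) (hC : 0 < C) (hQ : 0 < Q) (hS : 0 < S)
    (hvp : C/Q < v_p) (hAM : C/Q < -(A*M)) :
    StrictAntiOn (entryExit A M C Q S v_p) (Ici (-(A*M))) := by
  have hsub : Ici (-(A*M)) ⊆ Ioi (C/Q) := Ici_subset_Ioi.2 hAM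
  refine strictAntiOn_of_deriv_neg (convex_Ici _)
    ((continuousOn_entryExit hA.ne' hC hQ hS.ne' hvp).mono hsub) fun v hv => ?_
  rw [interior_Ici] at hv
  have hv' : C/Q < v := hsub (mem_Ici_of_Ioi hv)
  have hv0 : 0 < v := (div_pos hC hQ).trans hv'
  rw [(hasDerivAt_entryExit_of_div_lt hA.ne' hC hQ hS.ne' hvp hv').deriv]
  refine div_neg_of_pos_of_neg (mul_pos hC (by linarith [mem_Ioi.1 hv])) ?_
  exact mul_neg_of_pos_of_neg (by positivity) (sub_mul_neg_of_div_lt hQ hv')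

theorem tendsto_entryExit_nhdsGT_atBot (hC : C ≠ 0) (hQ : 0 < Q)
    (hK : (A*M*Q + C)/(A*Q*S) < 0) (hvp : v_p ≠ 0) (hCvp : C - Q*v_p < 0) :
    Tendsto (entryExit A M C Q S v_p) (𝓝[>] (C/Q)) atBot := by
  have hden : Tendsto (fun v => C - Q*v) (𝓝[>] (C/Q)) (𝓝[<] 0) := by
    refine tendsto_nhdsWithin_iff.2 ⟨?_, ?_⟩
    · refine ((by fun_prop : Continuous fun v : ℝ => C - Q*v).tendsto' (C/Q) 0
        ?_).mono_left nhdsWithin_le_nhds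
      rw [mul_div_cancel₀ _ hQ.ne', sub_self]
    · filter_upwards [self_mem_nhdsWithin] with v hv using sub_mul_neg_of_div_lt hQ hv
  have hlog : Tendsto (fun v => log ((C - Q*v_p)/(C - Q*v))) (𝓝[>] (C/Q)) atTop :=
    tendsto_log_atTop.comp ((tendsto_inv_nhdsLT_zero.comp hden).const_mul_atBot_of_neg hCvp)
  have hrest : Tendsto (fun v => M/S * log (v/v_p)) (𝓝[>] (C/Q)) (𝓝 (M/S * log (C/Q/v_p))) :=
    (((continuousAt_id.div_const v_p).log (div_ne_zero (div_ne_zero hC hQ.ne') hvp)).const_mul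
      _).tendsto.mono_left nhdsWithin_le_nhds
  exact (hlog.const_mul_atTop_of_neg hK).atBot_add hrest

end

theorem stmt_9_general (A M C Q S v_p : ℝ)
    (hA : A ∈ Set.Ioo (0:ℝ) 1)
    (hC : 0 < C) (hQ : 0 < Q) (hS : 0 < S)
    (hdeg : A*M*Q + C < 0) (hvp : -(A*M) < v_p)
    (I : ℝ → ℝ)
    (hI : ∀ v₀, I v₀ = ((A*M*Q + C)/(A*Q*S)) * Real.log ((C - Q*v_p)/(C - Q*v₀))
        + (M/S) * Real.log (v₀/v_p)) :
    ContinuousOn I (Set.Ioo (C/Q) (-(A*M))) ∧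
    StrictMonoOn I (Set.Ioo (C/Q) (-(A*M))) ∧
    Filter.Tendsto I (nhdsWithin (C/Q) (Set.Ioi (C/Q))) Filter.atBot ∧
    0 < I (-(A*M)) ∧
    (∃! v₀ : ℝ, v₀ ∈ Set.Ioo (C/Q) (-(A*M)) ∧ I v₀ = 0) := by
  obtain rfl : I = entryExit A M C Q S v_p := funext hI
  obtain ⟨hA, -⟩ := hA
  have hAM : C/Q < -(A*M) := by
    rw [div_lt_iff₀ hQ]
    linarith
  have hCvp : C/Q < v_p := hAM.trans hvp
  have hcont : ContinuousOn (entryExit A M C Q S v_p) (Ioc (C/Q) (-(A*M))) :=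
    (continuousOn_entryExit hA.ne' hC hQ hS.ne' hCvp).mono Ioc_subset_Ioi_self
  have hmono := strictMonoOn_entryExit (M := M) hA hC hQ hS hCvp
  have hbot : Tendsto (entryExit A M C Q S v_p) (𝓝[>] (C/Q)) atBot :=
    tendsto_entryExit_nhdsGT_atBot hC.ne' hQ (div_neg_of_neg_of_pos hdeg (by positivity))
      ((div_pos hC hQ).trans hCvp).ne' (sub_mul_neg_of_div_lt hQ hCvp)
  have hpos : 0 < entryExit A M C Q S v_p (-(A*M)) := by
    simpa using strictAntiOn_entryExit hA hC hQ hS hCvp hAM self_mem_Ici hvp.le hvp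
  exact ⟨hcont.mono Ioo_subset_Ioc_self, hmono.mono Ioo_subset_Ioc_self, hbot, hpos,
    hmono.existsUnique_eq_of_tendsto_atBot hAM hcont hbot hpos⟩

theorem stmt_9 (A M C Q S v_p : ℝ)
    (hA : A ∈ Set.Ioo (0:ℝ) 1) (hM : M ∈ Set.Ioo (-1:ℝ) 0)
    (hC : 0 < C) (hQ : 0 < Q) (hS : 0 < S)
    (hdeg : A*M*Q + C < 0) (hvp : -(A*M) < v_p)
    (I : ℝ → ℝ)
    (hI : ∀ v₀, I v₀ = ((A*M*Q + C)/(A*Q*S)) * Real.log ((C - Q*v_p)/(C - Q*v₀))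
        + (M/S) * Real.log (v₀/v_p)) :
    ContinuousOn I (Set.Ioo (C/Q) (-(A*M))) ∧
    StrictMonoOn I (Set.Ioo (C/Q) (-(A*M))) ∧
    Filter.Tendsto I (nhdsWithin (C/Q) (Set.Ioi (C/Q))) Filter.atBot ∧
    0 < I (-(A*M)) ∧
    (∃! v₀ : ℝ, v₀ ∈ Set.Ioo (C/Q) (-(A*M)) ∧ I v₀ = 0) :=
  stmt_9_general A M C Q S v_p hA hC hQ hS hdeg hvp I hI
end

section
/- Let e = v₂ - h₂(u₂) where v₂ = h₂(u₂) is an invariant curve of u₂' = -AMQ·u₂·((A-M+AM)u₂ - v₂), v₂' = -A²M·(u₂ - Qv₂), with h₂'·u₂'|_{v₂=h₂} = v₂'|_{v₂=h₂} (exact invariance). If additionally u₂' does not depend on e beyond the linear term via v₂, then e' = A²QM·e along solutions; since M < 0, the deviation e decays exponentially, i.e., the invariant curve is attracting. -/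
theorem stmt_14 (A M Q : ℝ)
    (hA : A ∈ Set.Ioo (0:ℝ) 1) (hM : M ∈ Set.Ioo (-1:ℝ) 0) (hQ : 0 < Q)
    (U V : ℝ → ℝ → ℝ)
    (hU : ∀ u₂ v₂, U u₂ v₂ = -(A*M*Q) * u₂ * ((A - M + A*M)*u₂ - v₂))
    (hV : ∀ u₂ v₂, V u₂ v₂ = -(A^2*M) * (u₂ - Q*v₂))
    (h₂ : ℝ → ℝ)
    (hinv : ∀ u, deriv h₂ u * U u (h₂ u) = V u (h₂ u)) :
    (∀ u e, V u (e + h₂ u) - deriv h₂ u * U u (h₂ u) = A^2*Q*M*e) ∧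
    A^2*Q*M < 0 := by
  obtain ⟨hA0, _⟩ := hA
  obtain ⟨_, hM0⟩ := hM
  constructor
  · intro u e
    rw [hinv u, hV, hV]; ring
  · have : 0 < A^2*Q := by positivity
    nlinarith
end

section
/- For the system v₃' = AMQ(A-M+AM - v₃)v₃ + A²M(Qv₃ - 1)ε₃, ε₃' = AMQ·ε₃·(A-M+AM - v₃) with A ∈ (0,1), M ∈ (-1,0), Q > 0, A-M+AM > 0: if a center manifold at p₃ = (A-M+AM, 0) is given by v₃ = g₃(ε₃) with g₃(0) = A-M+AM and g₃'(0) = A(A-M+AM-1/Q)/((A-M+AM)Q), then the reduced flow satisfies ε₃' = -(A²M(A-M+AM-1/Q)/(A-M+AM))·ε₃² + O(ε₃³); in particular, if A-M+AM > 1/Q the flow along the center manifold is directed away from p₃ (ε₃' > 0 for small ε₃ > 0). -/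
/-!
On the center manifold the reduced flow is `ε₃' = A M Q ε₃ (g₃ 0 - g₃ ε₃)`. Second-order Taylor
expansion `g₃ ε₃ = g₃ 0 + g₃'(0) ε₃ + O(ε₃²)` turns this into `-A M Q g₃'(0) ε₃² + O(ε₃³)`, and
`-A M Q g₃'(0)` is the stated coefficient. When `A - M + A M > 1/Q` that coefficient is positive
(as `M < 0`), so the quadratic term dominates and `ε₃' > 0` for small `ε₃ ≠ 0`.
-/

open Asymptotics Filter Topology

theorem isBigO_sub_pow_succ_of_hasDerivAt {E : Type*} [NormedAddCommGroup E] [NormedSpace ℝ E]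
    {f f' : ℝ → E} {x₀ : ℝ} {n : ℕ}
    (hff' : ∀ᶠ x in 𝓝 x₀, HasDerivAt f (f' x) x) (hf' : f' =O[𝓝 x₀] fun x ↦ (x - x₀) ^ n) :
    (fun x ↦ f x - f x₀) =O[𝓝 x₀] fun x ↦ (x - x₀) ^ (n + 1) := by
  obtain ⟨C, hC0, hC⟩ := hf'.exists_nonneg
  have hseg := (convex_univ (𝕜 := ℝ)).eventually_nhdsWithin_segment (Set.mem_univ x₀)
    (p := fun y ↦ HasDerivAt f (f' y) y ∧ ‖f' y‖ ≤ C * ‖(y - x₀) ^ n‖)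
    (by simpa only [nhdsWithin_univ] using hff'.and hC.bound)
  rw [nhdsWithin_univ] at hseg
  refine .of_bound C ?_
  filter_upwards [hseg] with x hx
  have hbound : ∀ y ∈ segment ℝ x₀ x, ‖f' y‖ ≤ C * ‖x - x₀‖ ^ n := fun y hy ↦
    calc ‖f' y‖ ≤ C * ‖(y - x₀) ^ n‖ := (hx y hy).2
      _ ≤ C * ‖x - x₀‖ ^ n := by
        rw [norm_pow]; gcongr; exact norm_sub_le_of_mem_segment hy
  have := (convex_segment x₀ x).norm_image_sub_le_of_norm_hasDerivWithin_le
    (fun y hy ↦ (hx y hy).1.hasDerivWithinAt) hbound (left_mem_segment ℝ x₀ x)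
    (right_mem_segment ℝ x₀ x)
  simpa [norm_pow, pow_succ, mul_assoc] using this

theorem ContDiffAt.isBigO_sub_sub_deriv_mul {g : ℝ → ℝ} {x₀ : ℝ} (hg : ContDiffAt ℝ 2 g x₀) :
    (fun x ↦ g x - g x₀ - deriv g x₀ * (x - x₀)) =O[𝓝 x₀] fun x ↦ (x - x₀) ^ 2 := by
  have hderiv : ∀ᶠ x in 𝓝 x₀,
      HasDerivAt (fun y ↦ g y - deriv g x₀ * (y - x₀)) (deriv g x - deriv g x₀) x := by
    filter_upwards [hg.eventually (by simp)] with x hx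
    simpa using (hx.differentiableAt (by simp)).hasDerivAt.fun_sub
      (((hasDerivAt_id x).sub_const x₀).const_mul (deriv g x₀))
  have hderiv_sub : (fun x ↦ deriv g x - deriv g x₀) =O[𝓝 x₀] fun x ↦ (x - x₀) ^ 1 := by
    simpa using ((hg.derivWithin (m := 1) (by norm_num)).differentiableAt
      (by simp)).isBigO_sub
  exact (isBigO_sub_pow_succ_of_hasDerivAt hderiv hderiv_sub).congr_left fun x ↦ by ring

theorem eventually_pos_of_isBigO_sub_mul_sq {f : ℝ → ℝ} {c : ℝ} (hc : 0 < c)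
    (hf : (fun x ↦ f x - c * x ^ 2) =O[𝓝 0] fun x ↦ x ^ 3) :
    ∀ᶠ x in 𝓝[≠] 0, 0 < f x := by
  have hsmall := (hf.trans_isLittleO (isLittleO_pow_pow (𝕜 := ℝ) (by norm_num : 2 < 3))).def
    (half_pos hc)
  filter_upwards [nhdsWithin_le_nhds hsmall, self_mem_nhdsWithin] with x hx hx0
  have hsq : 0 < x ^ 2 := pow_two_pos_of_ne_zero hx0
  rw [Real.norm_eq_abs, Real.norm_eq_abs, abs_of_pos hsq, abs_le] at hx
  nlinarith [hx.1]

theorem stmt_16_general (A M Q : ℝ)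
    (hA : A ∈ Set.Ioo (0:ℝ) 1) (hM : M ∈ Set.Ioo (-1:ℝ) 0) (hQ : 0 < Q)
    (Fe : ℝ → ℝ → ℝ)
    (hFe : ∀ v₃ ε₃, Fe v₃ ε₃ = A*M*Q*ε₃*(A - M + A*M - v₃))
    (g₃ : ℝ → ℝ) (hg : ContDiffAt ℝ 2 g₃ 0)
    (hg0 : g₃ 0 = A - M + A*M)
    (hg1 : deriv g₃ 0 = A*(A - M + A*M - 1/Q)/((A - M + A*M)*Q)) :
    ((fun ε₃ => Fe (g₃ ε₃) ε₃ -
        (-(A^2*M*(A - M + A*M - 1/Q)/(A - M + A*M)) * ε₃^2))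
      =O[nhds (0:ℝ)] fun ε₃ => ε₃^3) ∧
    (1/Q < A - M + A*M →
      ∃ δ > 0, ∀ ε₃ ∈ Set.Ioo (0:ℝ) δ, 0 < Fe (g₃ ε₃) ε₃) := by
  have hexpansion : (fun ε₃ => Fe (g₃ ε₃) ε₃ -
      (-(A^2*M*(A - M + A*M - 1/Q)/(A - M + A*M)) * ε₃^2)) =O[𝓝 0] fun ε₃ => ε₃^3 := by
    refine (((isBigO_refl (fun ε : ℝ ↦ ε) _).mul hg.isBigO_sub_sub_deriv_mul).const_mul_left
      (-(A*M*Q))).congr (fun ε ↦ ?_) (fun ε ↦ by ring)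
    rw [hFe, hg0, hg1]
    field_simp
    ring
  refine ⟨hexpansion, fun hcond ↦ ?_⟩
  have hC : 0 < A - M + A*M := (one_div_pos.2 hQ).trans hcond
  have hcoef : 0 < -(A^2*M*(A - M + A*M - 1/Q)/(A - M + A*M)) := by
    rw [← neg_div]
    refine div_pos ?_ hC
    linarith [mul_pos (mul_pos (pow_pos hA.1 2) (neg_pos.2 hM.2)) (sub_pos.2 hcond)]
  obtain ⟨δ, hδ, hpos⟩ := mem_nhdsGT_iff_exists_Ioo_subset.1
    (nhdsGT_le_nhdsNE 0 (eventually_pos_of_isBigO_sub_mul_sq hcoef hexpansion))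
  exact ⟨δ, hδ, hpos⟩

theorem stmt_16 (A M Q : ℝ)
    (hA : A ∈ Set.Ioo (0:ℝ) 1) (hM : M ∈ Set.Ioo (-1:ℝ) 0) (hQ : 0 < Q)
    (hpos : 0 < A - M + A*M)
    (Fv Fe : ℝ → ℝ → ℝ)
    (hFv : ∀ v₃ ε₃, Fv v₃ ε₃ = A*M*Q*(A - M + A*M - v₃)*v₃ + A^2*M*(Q*v₃ - 1)*ε₃)
    (hFe : ∀ v₃ ε₃, Fe v₃ ε₃ = A*M*Q*ε₃*(A - M + A*M - v₃))
    (g₃ : ℝ → ℝ) (hg : ContDiffAt ℝ 2 g₃ 0)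
    (hg0 : g₃ 0 = A - M + A*M)
    (hg1 : deriv g₃ 0 = A*(A - M + A*M - 1/Q)/((A - M + A*M)*Q))
    (hinv : ∀ ε₃, deriv g₃ ε₃ * Fe (g₃ ε₃) ε₃ = Fv (g₃ ε₃) ε₃) :
    ((fun ε₃ => Fe (g₃ ε₃) ε₃ -
        (-(A^2*M*(A - M + A*M - 1/Q)/(A - M + A*M)) * ε₃^2))
      =O[nhds (0:ℝ)] fun ε₃ => ε₃^3) ∧
    (1/Q < A - M + A*M →
      ∃ δ > 0, ∀ ε₃ ∈ Set.Ioo (0:ℝ) δ, 0 < Fe (g₃ ε₃) ε₃) :=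
  stmt_16_general A M Q hA hM hQ Fe hFe g₃ hg hg0 hg1
end

section
/- Consider the system r₃' = -(AMQ - r₃)(A(1+M-r₃) + (M-r₃)(r₃-1) - v₃)·r₃, v₃' = (AMQ - r₃)(A(1+M-r₃) + (M-r₃)(r₃-1) - v₃)·v₃, with A ∈ (0,1), M ∈ (-1,0), Q > 0, A-M+AM > 0. Then the origin is a hyperbolic saddle with unstable r₃-direction and stable v₃-direction, and the curve v₃ = A-M+AM + (1-A+M)r₃ - r₃² consists of equilibria whose nontrivial eigenvalue equals -AMQ(A-M+AM) + O(r₃) > 0 for r₃ small. -/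
/-! Both right-hand sides factor through `K r * (ℓ r - v)` with `K r = A*M*Q - r`, which is
negative for `r ≥ 0`. Hence `v ↦ Fv r v` is a logistic-type quadratic whose derivative at its
nonzero root `ℓ r` is `-K r * ℓ r`, positive while `ℓ r > 0`, i.e. near `r = 0` since
`ℓ 0 = A - M + A*M > 0`. -/

lemma hasDerivAt_mul_sub_mul_id (k c v : ℝ) :
    HasDerivAt (fun v => k * (c - v) * v) (k * (c - 2 * v)) v :=
  (((hasDerivAt_id' v).const_sub c).const_mul k |>.fun_mul (hasDerivAt_id' v)).congr_deriv (by ring)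

lemma hasDerivAt_mul_id_zero {f : ℝ → ℝ} (hf : DifferentiableAt ℝ f 0) :
    HasDerivAt (fun x => f x * x) (f 0) 0 := by
  simpa using hf.hasDerivAt.fun_mul (hasDerivAt_id' 0)

lemma exists_forall_Ico_pos_of_continuousAt {f : ℝ → ℝ} (hf : ContinuousAt f 0)
    (h : 0 < f 0) :
    ∃ δ > 0, ∀ x ∈ Set.Ico (0 : ℝ) δ, 0 < f x := by
  obtain ⟨δ, hδ, hf⟩ := Metric.eventually_nhds_iff.mp (hf.eventually (lt_mem_nhds h))
  refine ⟨δ, hδ, fun x hx => hf ?_⟩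
  rw [Real.dist_0_eq_abs, abs_of_nonneg hx.1]
  exact hx.2

theorem stmt_17 (A M Q : ℝ)
    (hA : A ∈ Set.Ioo (0:ℝ) 1) (hM : M ∈ Set.Ioo (-1:ℝ) 0) (hQ : 0 < Q)
    (hpos : 0 < A - M + A*M)
    (Fr Fv : ℝ → ℝ → ℝ)
    (hFr : ∀ r₃ v₃, Fr r₃ v₃ = -((A*M*Q - r₃)*(A*(1 + M - r₃) + (M - r₃)*(r₃ - 1) - v₃)*r₃))
    (hFv : ∀ r₃ v₃, Fv r₃ v₃ = (A*M*Q - r₃)*(A*(1 + M - r₃) + (M - r₃)*(r₃ - 1) - v₃)*v₃)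
    (ℓ : ℝ → ℝ) (hℓ : ∀ r₃, ℓ r₃ = A - M + A*M + (1 - A + M)*r₃ - r₃^2) :
    (deriv (fun r => Fr r 0) 0 = -(A*M*Q*(A - M + A*M)) ∧
      0 < deriv (fun r => Fr r 0) 0) ∧
    (deriv (fun v => Fv 0 v) 0 = A*M*Q*(A - M + A*M) ∧
      deriv (fun v => Fv 0 v) 0 < 0) ∧
    (∀ r₃, Fr r₃ (ℓ r₃) = 0 ∧ Fv r₃ (ℓ r₃) = 0) ∧
    (∀ r₃, deriv (fun v => Fv r₃ v) (ℓ r₃) = -((A*M*Q - r₃) * ℓ r₃)) ∧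
    (∃ δ > 0, ∀ r₃ ∈ Set.Ico (0:ℝ) δ, 0 < deriv (fun v => Fv r₃ v) (ℓ r₃)) := by
  have hAMQ : A*M*Q < 0 := mul_neg_of_neg_of_pos (mul_neg_of_pos_of_neg hA.1 hM.2) hQ
  have hℓ' : ∀ r, A*(1 + M - r) + (M - r)*(r - 1) = ℓ r := fun r => by rw [hℓ]; ring
  have hℓ0 : ℓ 0 = A - M + A*M := by simp [hℓ]
  have hℓd : Differentiable ℝ ℓ := by rw [funext hℓ]; fun_prop
  have hdFr : deriv (fun r => Fr r 0) 0 = -(A*M*Q * ℓ 0) := by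
    simp_rw [hFr, hℓ', sub_zero]
    have hK : DifferentiableAt ℝ (fun r => (A*M*Q - r) * ℓ r) 0 := by fun_prop
    simpa using (hasDerivAt_mul_id_zero hK).neg.deriv
  have hdFv : ∀ r v, deriv (fun v => Fv r v) v = (A*M*Q - r) * (ℓ r - 2*v) := by
    intro r v
    simp_rw [hFv, hℓ']
    exact (hasDerivAt_mul_sub_mul_id _ _ _).deriv
  have hdFv0 : deriv (fun v => Fv 0 v) 0 = A*M*Q * ℓ 0 := by
    rw [hdFv, mul_zero, sub_zero, sub_zero]
  have hdFvℓ : ∀ r, deriv (fun v => Fv r v) (ℓ r) = -((A*M*Q - r) * ℓ r) := fun r => by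
    rw [hdFv]; ring
  obtain ⟨δ, hδ, hℓpos⟩ :=
    exists_forall_Ico_pos_of_continuousAt hℓd.continuous.continuousAt (hℓ0 ▸ hpos)
  have hsaddle : A*M*Q * (A - M + A*M) < 0 := mul_neg_of_neg_of_pos hAMQ hpos
  refine ⟨⟨by rw [hdFr, hℓ0], by rw [hdFr, hℓ0]; exact neg_pos.mpr hsaddle⟩,
    ⟨by rw [hdFv0, hℓ0], by rw [hdFv0, hℓ0]; exact hsaddle⟩,
    fun r => ⟨by simp [hFr, hℓ'], by simp [hFv, hℓ']⟩, hdFvℓ, δ, hδ, fun r hr => ?_⟩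
  have hK : A*M*Q - r < 0 := by linarith [hr.1]
  rw [hdFvℓ]
  exact neg_pos.mpr (mul_neg_of_neg_of_pos hK (hℓpos r hr))
end
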